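/- arXiv:1803.04753 — 5 statements merged into one kernel-verified Lean document; each statement's English description precedes it below -/
import Mathlib

section
/- Assume Schanuel's conjecture: for every n ≥ 1 and all complex numbers z₁,…,zₙ that are linearly independent over ℚ, trdeg_ℚ ℚ(z₁,…,zₙ, exp(z₁),…,exp(zₙ)) ≥ n. Then e = exp(1) and π are algebraically independent over ℚ. -/
/-- The transcendence degree over `ℚ` of the subfield of `ℂ` generated by a set `s`:
the supremum of the cardinalities of subsets of that subfield that are algebraically
independent over `ℚ`. -/
noncomputable def trdegRat (s : Set ℂ) : Cardinal :=
  ⨆ t : {t : Set ℂ // t ⊆ (Subfield.closure s : Set ℂ) ∧ AlgebraicIndependent ℚ ((↑) : t → ℂ)},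
    Cardinal.mk t.1

/-!
Apply Schanuel's conjecture to `1` and `πi`, which are linearly independent over `ℚ`. Since
`exp (πi) = -1`, the field `ℚ(1, πi, e, -1)` contains two algebraically independent elements, and
every element of it is algebraic over `ℚ(e, π)` because `i` is algebraic. By the exchange property
of the algebraic matroid, a field algebraic over `ℚ(e, π)` can only contain two algebraically
independent elements if `e` and `π` are themselves algebraically independent.
-/

open Set Function Cardinal

theorem algebraicIndependent_of_isAlgebraic_adjoin_of_natCard_le {ι R A : Type*} [CommRing R] [CommRing A]
    [IsDomain A] [Algebra R A] [FaithfulSMul R A] [Finite ι] {x : ι → A} {t : Set A}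
    (ht : AlgebraicIndependent R ((↑) : t → A))
    (htx : ∀ a ∈ t, IsAlgebraic (Algebra.adjoin R (range x)) a)
    (hcard : (Nat.card ι : Cardinal) ≤ #t) : AlgebraicIndependent R x := by
  set M := AlgebraicIndependent.matroid R A
  have htM : t ⊆ M.closure (range x) := by
    rw [AlgebraicIndependent.matroid_closure_eq]; exact htx
  have hrk : (Nat.card ι : ℕ∞) ≤ M.eRk (range x) := calc
    (Nat.card ι : ℕ∞) ≤ t.encard := natCast_le_toENat.2 hcard
    _ ≤ M.eRk (M.closure (range x)) :=
      (AlgebraicIndependent.matroid_indep_iff.2 ht).encard_le_eRk_of_subset htM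
    _ = M.eRk (range x) := M.eRk_closure_eq _
  have hrange : (range x).encard = Nat.card (range x) := by
    rw [Nat.card_coe_set_eq, (finite_range x).cast_ncard_eq]
  have hle : Nat.card ι ≤ Nat.card (range x) := by
    exact_mod_cast hrk.trans ((M.eRk_le_encard _).trans_eq hrange)
  have hinj : Injective x := fun i j hij =>
    (rangeFactorization_surjective.bijective_of_nat_card_le hle).1 (Subtype.ext hij)
  refine .of_subtype_range hinj (AlgebraicIndependent.matroid_indep_iff.1 ?_)
  refine (M.indep_iff_eRk_eq_encard_of_finite (finite_range x)).2 <|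
    (M.eRk_le_encard _).antisymm ?_
  rw [hrange]
  exact le_trans (by exact_mod_cast Finite.card_range_le x) hrk

theorem IsAlgebraic.of_mem_subfieldClosure {K E : Type*} [Field K] [Field E] [Algebra K E]
    {s : Set E} (hs : ∀ a ∈ s, IsAlgebraic K a) {a : E} (ha : a ∈ Subfield.closure s) :
    IsAlgebraic K a :=
  mem_algebraicClosure_iff.1 <|
    (Subfield.closure_le (t := (algebraicClosure K E).toSubfield)).2
      (fun b hb => mem_algebraicClosure_iff.2 (hs b hb)) ha

theorem exists_algebraicIndependent_of_natCast_le_trdegRat {s : Set ℂ} {n : ℕ}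
    (h : (n : Cardinal) ≤ trdegRat s) : ∃ t ⊆ (Subfield.closure s : Set ℂ),
      AlgebraicIndependent ℚ ((↑) : t → ℂ) ∧ (n : Cardinal) ≤ #t := by
  cases n with
  | zero => exact ⟨∅, empty_subset _, algebraicIndependent_empty, by simp⟩
  | succ n =>
    rw [Nat.cast_succ, ← succ_natCast, Order.succ_le_iff] at h
    obtain ⟨⟨t, hts, ht⟩, hnt⟩ := (lt_ciSup_iff' bddAbove_of_small).1 h
    refine ⟨t, hts, ht, ?_⟩
    rw [Nat.cast_succ, ← succ_natCast]
    exact Order.succ_le_of_lt hnt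

theorem Complex.linearIndependent_one_ofReal_mul_I {r : ℝ} (hr : r ≠ 0) :
    LinearIndependent ℚ ![1, (r : ℂ) * I] :=
  LinearIndependent.pair_iff.2 fun a b hab =>
    ⟨by simpa using congrArg re hab, by simpa [hr] using congrArg im hab⟩

theorem Complex.isAlgebraic_I (R : Type*) [CommRing R] [Nontrivial R] [Algebra R ℂ] :
    IsAlgebraic R I :=
  .of_pow two_pos <| by
    rw [I_sq, ← map_one (algebraMap R ℂ), ← map_neg]; exact isAlgebraic_algebraMap _

theorem isAlgebraic_adjoin_exp_one_pi {a : ℂ}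
    (ha : a ∈ range ![1, Real.pi * Complex.I] ∪
      range fun i => Complex.exp (![1, Real.pi * Complex.I] i)) :
    IsAlgebraic (IntermediateField.adjoin ℚ (range ![Complex.exp 1, (Real.pi : ℂ)])) a := by
  set K := IntermediateField.adjoin ℚ (range ![Complex.exp 1, (Real.pi : ℂ)])
  have hmem (i : Fin 2) : IsAlgebraic K (![Complex.exp 1, (Real.pi : ℂ)] i) :=
    isAlgebraic_algebraMap (⟨_, IntermediateField.subset_adjoin ℚ _ (mem_range_self i)⟩ : K)
  rcases ha with ⟨i, rfl⟩ | ⟨i, rfl⟩ <;> fin_cases i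
  · exact isAlgebraic_one
  · exact (hmem 1).mul (Complex.isAlgebraic_I K)
  · exact hmem 0
  · simpa [Complex.exp_pi_mul_I] using isAlgebraic_one.neg

/-- Schanuel's conjecture implies that `e` and `π` are algebraically independent over `ℚ`. -/
theorem e_pi_algebraicIndependent_of_schanuel
    (schanuel : ∀ n : ℕ, 1 ≤ n → ∀ z : Fin n → ℂ, LinearIndependent ℚ z →
      (n : Cardinal) ≤ trdegRat (Set.range z ∪ Set.range fun i => Complex.exp (z i))) :
    AlgebraicIndependent ℚ ![Complex.exp 1, (Real.pi : ℂ)] := by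
  obtain ⟨t, hts, ht, hcard⟩ := exists_algebraicIndependent_of_natCast_le_trdegRat <|
    schanuel 2 one_le_two _ (Complex.linearIndependent_one_ofReal_mul_I Real.pi_ne_zero)
  refine algebraicIndependent_of_isAlgebraic_adjoin_of_natCard_le ht (fun a ha => ?_)
    (by simpa using hcard)
  rw [← IntermediateField.isAlgebraic_adjoin_iff]
  exact .of_mem_subfieldClosure (fun b hb => isAlgebraic_adjoin_exp_one_pi hb) (hts ha)
end

section
/- Let K be a differential field with derivation D and field of constants C, and let a₁, a₂, b ∈ K with D(a₁) ≠ 0, D(a₂) ≠ 0 and D(b) ≠ 0. Assume f(a₁, b) = 0. Then f(a₂, b) = 0 if and only if there exist constants p, q, r, s ∈ C with p·s − q·r ≠ 0 and r·a₁ + s ≠ 0 such that a₂ = (p·a₁ + q)/(r·a₁ + s), i.e. a₂ is obtained from a₁ by a fractional linear transformation with invertible matrix of coefficients in C. -/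
/-- The Schwarzian derivative of `y` with respect to a derivation `δ`:
`S_δ(y) = δ³(y)/δ(y) − (3/2)·(δ²(y)/δ(y))²`. -/
noncomputable def schwarzian {K : Type*} [Field K] (δ : K → K) (y : K) : K :=
  δ (δ (δ y)) / δ y - (3 / 2) * (δ (δ y) / δ y) ^ 2

/-- The rational function `R` appearing in the differential equation of the `j`-function. -/
noncomputable def jRat {K : Type*} [Field K] (y : K) : K :=
  (y ^ 2 - 1968 * y + 2654208) / (2 * y ^ 2 * (y - 1728) ^ 2)

/-- The two-variable form of the differential equation of the `j`-function:
`f(x, y) = S_{∂ₓ}(y) + R(y)·(∂ₓ(y))²` where `∂ₓ(y) = D y / D x`. -/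
noncomputable def jEq {K : Type*} [Field K] (D : K → K) (x y : K) : K :=
  schwarzian (fun u => D u / D x) y + jRat y * (D y / D x) ^ 2

/-!
Let `S_D` be the Schwarzian with respect to `D` itself. The chain rule
`S_{∂ₓ}(y) = (S_D(y) - S_D(x)) / (D x)²` turns `f(x, b) = 0` into
`S_D(x) = S_D(b) + R(b)·(D b)²`, so once `f(a₁, b) = 0`, the equation `f(a₂, b) = 0` says
exactly `S_D(a₂) = S_D(a₁)`, i.e. `S_{∂_{a₁}}(a₂) = 0`. Möbius transformations with constant
coefficients preserve `S_D`. Conversely, let `S_δ(y) = 0` where `δ x = 1`, and put `u = δ y`,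
`v = δ u`. If `v = 0` then `y` is affine in `x`; otherwise `c = x + 2u/v`, `k = 4u³/v²` and
`m = y - 2u²/v` are constants with `y = m - k/(x - c)`.
-/

def IsMobiusImage {K : Type*} [Field K] (d : K → K) (x y : K) : Prop :=
  ∃ p q r s : K, d p = 0 ∧ d q = 0 ∧ d r = 0 ∧ d s = 0 ∧
    p * s - q * r ≠ 0 ∧ r * x + s ≠ 0 ∧ y = (p * x + q) / (r * x + s)

@[simp]
theorem Derivation.map_ofNat {R A M : Type*} [CommSemiring R] [CommSemiring A] [Algebra R A]
    [AddCommMonoid M] [Module A M] [Module R M] (d : Derivation R A M) (n : ℕ) [n.AtLeastTwo] :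
    d (ofNat(n) : A) = 0 :=
  d.map_natCast n

section

variable {K : Type*} [Field K] [CharZero K] {R : Type*} [CommRing R] [Algebra R K]
  (d : Derivation R K K)

theorem schwarzian_div_derivation {x y : K} (hx : d x ≠ 0) (hy : d y ≠ 0) :
    schwarzian (fun u => d u / d x) y = (schwarzian d y - schwarzian d x) / d x ^ 2 := by
  have h2 : d (d y / d x) = (d x * d (d y) - d y * d (d x)) / d x ^ 2 := by
    simp [Derivation.leibniz_div]
    field_simp
  have h3 : d ((d x * d (d y) - d y * d (d x)) / d x ^ 2 / d x) =
      (d x ^ 2 * d (d (d y)) - d x * d y * d (d (d x)) - 3 * d x * d (d x) * d (d y)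
        + 3 * d y * d (d x) ^ 2) / d x ^ 4 := by
    simp [Derivation.leibniz_div]
    field_simp
    ring
  simp only [schwarzian, h2, h3]
  field_simp
  ring

theorem jEq_eq_zero_iff {x y : K} (hx : d x ≠ 0) (hy : d y ≠ 0) :
    jEq d x y = 0 ↔ schwarzian d x = schwarzian d y + jRat y * d y ^ 2 := by
  rw [jEq, schwarzian_div_derivation d hx hy]
  field_simp
  constructor <;> intro h <;> linear_combination -h

theorem schwarzian_mobius {x p q r s : K} (hp : d p = 0) (hq : d q = 0) (hr : d r = 0)
    (hs : d s = 0) (hdet : p * s - q * r ≠ 0) (hx : r * x + s ≠ 0) :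
    schwarzian d ((p * x + q) / (r * x + s)) = schwarzian d x := by
  have h1 : d ((p * x + q) / (r * x + s)) = (p * s - q * r) * d x / (r * x + s) ^ 2 := by
    simp [Derivation.leibniz_div, hp, hq, hr, hs]
    field_simp
    ring
  have h2 : d ((p * s - q * r) * d x / (r * x + s) ^ 2) =
      (p * s - q * r) * ((r * x + s) * d (d x) - 2 * r * d x ^ 2) / (r * x + s) ^ 3 := by
    simp [Derivation.leibniz_div, hp, hq, hr, hs]
    field_simp
  have h3 : d ((p * s - q * r) * ((r * x + s) * d (d x) - 2 * r * d x ^ 2) / (r * x + s) ^ 3) =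
      (p * s - q * r) * ((r * x + s) ^ 2 * d (d (d x)) - 6 * r * (r * x + s) * d x * d (d x)
        + 6 * r ^ 2 * d x ^ 3) / (r * x + s) ^ 4 := by
    simp [Derivation.leibniz_div, hp, hq, hr, hs]
    field_simp
    ring
  rw [schwarzian, schwarzian, h1, h2, h3]
  field_simp
  ring

theorem isMobiusImage_of_schwarzian_eq_zero {x y : K} (hx : d x = 1) (hy : d y ≠ 0)
    (hS : schwarzian d y = 0) : IsMobiusImage d x y := by
  obtain ⟨u, hu⟩ : ∃ u, d y = u := ⟨_, rfl⟩
  obtain ⟨v, hv⟩ : ∃ v, d u = v := ⟨_, rfl⟩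
  rw [hu] at hy
  have key : 2 * u * d v = 3 * v ^ 2 := by
    rw [schwarzian, hu, hv] at hS
    field_simp at hS
    linear_combination hS
  by_cases hv0 : v = 0
  · refine ⟨u, y - u * x, 0, 1, hv ▸ hv0, ?_, d.map_zero, d.map_one_eq_zero, ?_, ?_, ?_⟩
    · simp [hx, hu, hv, hv0]
    · simpa using hy
    · simp
    · field_simp; ring
  · obtain ⟨c, hc_def⟩ : ∃ c, c = x + 2 * u / v := ⟨_, rfl⟩
    obtain ⟨k, hk_def⟩ : ∃ k, k = 4 * u ^ 3 / v ^ 2 := ⟨_, rfl⟩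
    obtain ⟨m, hm_def⟩ : ∃ m, m = y - 2 * u ^ 2 / v := ⟨_, rfl⟩
    have hc : d c = 0 := by
      simp [hc_def, Derivation.leibniz_div, hx, hv]
      field_simp
      linear_combination -key
    have hk : d k = 0 := by
      simp [hk_def, Derivation.leibniz_div, hv, hv0]
      field_simp
      linear_combination (-4 * v * u ^ 2) * key
    have hm : d m = 0 := by
      simp [hm_def, Derivation.leibniz_div, hu, hv]
      field_simp
      linear_combination u * key
    have hxc : x - c ≠ 0 := by simp [hc_def, hy, hv0]
    refine ⟨m, -(m * c + k), 1, -c, hm, by simp [hm, hc, hk], d.map_one_eq_zero, by simp [hc],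
      ?_, ?_, ?_⟩
    · simp [hk_def, hy, hv0]
    · simpa [← sub_eq_add_neg] using hxc
    · rw [hm_def, hk_def, hc_def]
      field_simp
      ring

theorem isMobiusImage_of_schwarzian_eq {x y : K} (hx : d x ≠ 0) (hy : d y ≠ 0)
    (h : schwarzian d y = schwarzian d x) : IsMobiusImage d x y := by
  have hδ : (fun u => d u / d x) = ⇑((d x)⁻¹ • d) := by
    ext u
    simp [div_eq_inv_mul]
  obtain ⟨p, q, r, s, hp, hq, hr, hs, hdet, hne, rfl⟩ :=
    isMobiusImage_of_schwarzian_eq_zero ((d x)⁻¹ • d) (x := x) (y := y) (by simp [hx])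
      (by simp [hx, hy])
      (by rw [← hδ, schwarzian_div_derivation d hx hy, h, sub_self, zero_div])
  simp only [Derivation.smul_apply, smul_eq_mul, mul_eq_zero, inv_eq_zero, hx, false_or]
    at hp hq hr hs
  exact ⟨p, q, r, s, hp, hq, hr, hs, hdet, hne, rfl⟩

end

/-- Given a non-constant solution `(a₁, b)` of the differential equation of `j`,
`(a₂, b)` is a solution if and only if `a₂` is obtained from `a₁` by a fractional
linear transformation with invertible matrix of coefficients in the constants. -/
theorem jEq_fibre {K : Type*} [Field K] [CharZero K] (D : K → K)
    (hadd : ∀ u v, D (u + v) = D u + D v)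
    (hmul : ∀ u v, D (u * v) = u * D v + v * D u)
    (a₁ a₂ b : K) (ha₁ : D a₁ ≠ 0) (ha₂ : D a₂ ≠ 0) (hb : D b ≠ 0)
    (h₁ : jEq D a₁ b = 0) :
    jEq D a₂ b = 0 ↔
      ∃ p q r s : K, D p = 0 ∧ D q = 0 ∧ D r = 0 ∧ D s = 0 ∧
        p * s - q * r ≠ 0 ∧ r * a₁ + s ≠ 0 ∧ a₂ = (p * a₁ + q) / (r * a₁ + s) := by
  obtain ⟨d, rfl⟩ : ∃ d : Derivation ℤ K K, ⇑d = D :=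
    ⟨Derivation.mk' (AddMonoidHom.mk' D hadd).toIntLinearMap hmul, rfl⟩
  rw [jEq_eq_zero_iff d ha₂ hb, ← (jEq_eq_zero_iff d ha₁ hb).mp h₁]
  constructor
  · exact isMobiusImage_of_schwarzian_eq d ha₁ ha₂
  · rintro ⟨p, q, r, s, hp, hq, hr, hs, hdet, hne, rfl⟩
    exact schwarzian_mobius d hp hq hr hs hdet hne
end

section
/- Let L, compactness, the condition (FG), and the submodular function δ be as in the context, and let a ≤ b in L. Then a is strong in b if and only if δ(x ⊓ a) ≤ δ(x) for every compact x ≤ b. -/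
open CompleteLattice

private lemma sup_compact {L : Type*} [CompleteLattice L] {x y : L}
    (hx : IsCompactElement x) (hy : IsCompactElement y) : IsCompactElement (x ⊔ y) := by
  classical
  have := isCompactElement_finsetSup (f := id) (insert x {y} : Finset L) ?_
  · simpa using this
  · intro z hz
    simp only [Finset.mem_insert, Finset.mem_singleton] at hz
    rcases hz with rfl | rfl <;> assumption

/-- `a` is strong (self-sufficient) in `b`: for every compact `x ≤ b` and compact
`y ≤ a` there is a compact `y'` with `y ≤ y' ≤ a` and `δ(x ⊔ y') ≥ δ(y')`
(i.e. the relative predimension `δ(x / a)` is non-negative). -/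
def IsStrong {L : Type*} [CompleteLattice L] (δ : L → ℤ) (a b : L) : Prop :=
  ∀ x, IsCompactElement x → x ≤ b → ∀ y, IsCompactElement y → y ≤ a →
    ∃ y', IsCompactElement y' ∧ y ≤ y' ∧ y' ≤ a ∧ δ y' ≤ δ (x ⊔ y')

/-- For `a ≤ b`, `a` is strong in `b` if and only if `δ(x ⊓ a) ≤ δ(x)` for every
compact `x ≤ b`. -/
theorem isStrong_iff {L : Type*} [CompleteLattice L] (δ : L → ℤ)
    (hFG : ∀ x c : L, IsCompactElement c → x ≤ c → IsCompactElement x)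
    (hbot : δ ⊥ = 0)
    (hsub : ∀ x y : L, IsCompactElement x → IsCompactElement y →
      δ (x ⊔ y) + δ (x ⊓ y) ≤ δ x + δ y)
    (a b : L) (hab : a ≤ b) :
    IsStrong δ a b ↔ ∀ x, IsCompactElement x → x ≤ b → δ (x ⊓ a) ≤ δ x := by
  constructor
  · intro hs x hx hxb
    obtain ⟨y', hy'c, hle, hy'a, hδ⟩ :=
      hs x hx hxb (x ⊓ a) (hFG _ x hx inf_le_left) inf_le_right
    have hxy' : x ⊓ y' = x ⊓ a :=
      le_antisymm (le_inf inf_le_left (le_trans inf_le_right hy'a))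
        (le_inf inf_le_left hle)
    have := hsub x y' hx hy'c
    rw [hxy'] at this
    linarith
  · intro h x hx hxb y hy hya
    refine ⟨(x ⊔ y) ⊓ a, hFG _ (x ⊔ y) (sup_compact hx hy) inf_le_left,
      le_inf le_sup_right hya, inf_le_right, ?_⟩
    have hz : x ⊔ (x ⊔ y) ⊓ a = x ⊔ y := by
      apply le_antisymm
      · exact sup_le le_sup_left inf_le_left
      · exact sup_le le_sup_left (le_sup_of_le_right (le_inf le_sup_right hya))
    rw [hz]
    exact h (x ⊔ y) (sup_compact hx hy) (sup_le hxb (le_trans hya hab))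
end

section
/- Let L, compactness, the condition (FG), the submodular function δ, and the descending chain condition (DCC) be as in the context. Then for every b ∈ L and every family (a_i)_{i∈I} of elements of L with a_i ≤ b and a_i strong in b for all i ∈ I, the infimum ⨅_{i∈I} a_i is strong in b. In particular, for any x ≤ b the self-sufficient closure ⌈x⌉_b := ⨅{a ∈ L : x ≤ a ≤ b and a is strong in b} is strong in b. -/
open CompleteLattice

/-!
Fix compact `x ≤ b` and `y ≤ ⨅ i, a i`. Below a compact element `δ` is bounded from below:
otherwise take `u` maximal (the ascending chain condition follows from (FG)) with `δ` unbounded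
on `[u, c]`, and a minimiser `s` of `δ` on some `[t, c]` with `u < t`; then `s < c` is strong in
`c` and, by submodularity, `δ` is still unbounded below `s`, which iterates against (DCC).
Hence `δ` attains its minimum on `[y, x ⊔ y]`, and by (DCC) there is a minimiser `v` with no
smaller minimiser, since a minimiser is strong in every element between it and `x ⊔ y`. If `u` is
a witness for `a i` strong in `b` (applied to `v` and `y`), submodularity makes `v ⊓ u` a
minimiser too, so `v ≤ u ≤ a i` for every `i` and `v` is a witness for `⨅ i, a i`.
-/

open Set

section

variable {L : Type*} [CompleteLattice L] {δ : L → ℤ}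

variable (L) in
def CompactElementsDownwardClosed : Prop :=
  ∀ x c : L, IsCompactElement c → x ≤ c → IsCompactElement x

def SubmodularOnCompacts (δ : L → ℤ) : Prop :=
  ∀ x y : L, IsCompactElement x → IsCompactElement y → δ (x ⊔ y) + δ (x ⊓ y) ≤ δ x + δ y

def IsStrongLT (δ : L → ℤ) (s c : L) : Prop :=
  IsCompactElement c ∧ s < c ∧ IsStrong δ s c

theorem wellFounded_isStrongLT
    (hDCC : ¬ ∃ c : ℕ → L, (∀ n, IsCompactElement (c n)) ∧ (∀ n, c (n + 1) < c n) ∧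
      ∀ n, IsStrong δ (c (n + 1)) (c n)) :
    WellFounded (IsStrongLT δ) := by
  rw [wellFounded_iff_isEmpty_descending_chain]
  exact ⟨fun ⟨c, hc⟩ ↦ hDCC ⟨c, fun n ↦ (hc n).1, fun n ↦ (hc n).2.1, fun n ↦ (hc n).2.2⟩⟩

theorem CompleteLattice.IsCompactElement.sup {x y : L} (hx : IsCompactElement x)
    (hy : IsCompactElement y) : IsCompactElement (x ⊔ y) := by
  classical
  simpa using isCompactElement_finsetSup (f := id) ({x, y} : Finset L) (by simp [hx, hy])

theorem wellFounded_gt_of_le_compact (hFG : CompactElementsDownwardClosed L) {c : L}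
    (hc : IsCompactElement c) : WellFounded (fun x y : L ↦ y < x ∧ x ≤ c) := by
  rw [wellFounded_iff_isEmpty_descending_chain]
  refine ⟨fun ⟨f, hf⟩ ↦ ?_⟩
  have hmono : StrictMono f := strictMono_nat_of_lt_succ fun n ↦ (hf n).1
  have hsup : IsCompactElement (⨆ n, f n) :=
    hFG _ c hc (iSup_le fun n ↦ (hmono.monotone n.le_succ).trans (hf n).2)
  rw [isCompactElement_iff_le_of_directed_sSup_le] at hsup
  obtain ⟨_, ⟨n, rfl⟩, hn⟩ := hsup (range f) (range_nonempty f)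
    (directedOn_range.mpr hmono.monotone.directed_le) sSup_range.ge
  exact (hmono n.lt_succ_self).not_ge ((le_iSup f (n + 1)).trans hn)

theorem Int.exists_isMinOn_of_bddBelow {α : Type*} {f : α → ℤ} {s : Set α}
    (hs : s.Nonempty) (hf : BddBelow (f '' s)) : ∃ a ∈ s, IsMinOn f s a := by
  obtain ⟨a, has, ha⟩ := Int.csInf_mem (hs.image f) hf
  exact ⟨a, has, fun b hb ↦ ha ▸ csInf_le hf (mem_image_of_mem f hb)⟩

theorem isStrong_of_isMinOn {s c : L} (hs : IsCompactElement s) (hsc : s ≤ c)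
    (hmin : IsMinOn δ (Icc s c) s) : IsStrong δ s c :=
  fun _ _ hxc _ _ hys ↦ ⟨s, hs, hys, le_rfl, hmin ⟨le_sup_right, sup_le hxc hsc⟩⟩

theorem delta_inf_le (hsub : SubmodularOnCompacts δ) {x y : L} (hx : IsCompactElement x)
    (hy : IsCompactElement y) (h : δ y ≤ δ (x ⊔ y)) : δ (x ⊓ y) ≤ δ x := by
  linarith [hsub x y hx hy]

theorem exists_isStrongLT_of_not_bddBelow (hFG : CompactElementsDownwardClosed L)
    (hsub : SubmodularOnCompacts δ) {c : L} (hc : IsCompactElement c)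
    (h : ¬ BddBelow (δ '' Iic c)) : ∃ s, IsStrongLT δ s c ∧ ¬ BddBelow (δ '' Iic s) := by
  obtain ⟨u, ⟨huc, hu⟩, humax⟩ := (wellFounded_gt_of_le_compact hFG hc).has_min
    {u | u ≤ c ∧ ¬ BddBelow (δ '' Icc u c)} ⟨⊥, bot_le, by rwa [Icc_bot]⟩
  obtain ⟨_, ⟨t, ⟨hut, htc⟩, rfl⟩, ht⟩ := not_bddBelow_iff.mp hu (min (δ u) (δ c))
  have hut' : u < t := hut.lt_of_ne (by rintro rfl; exact (min_le_left _ _).not_gt ht)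
  have hbdd : BddBelow (δ '' Icc t c) := by
    by_contra h'
    exact humax t ⟨htc, h'⟩ ⟨hut', htc⟩
  obtain ⟨s, ⟨hts, hsc⟩, hmin⟩ := Int.exists_isMinOn_of_bddBelow (nonempty_Icc.mpr htc) hbdd
  have hs : IsCompactElement s := hFG s c hc hsc
  have hmin' : IsMinOn δ (Icc s c) s := hmin.on_subset (Icc_subset_Icc_left hts)
  have hsc' : s < c := hsc.lt_of_ne <| by
    rintro rfl
    exact (hmin ⟨le_rfl, htc⟩).not_gt (ht.trans_le (min_le_right _ _))
  refine ⟨s, ⟨hc, hsc', isStrong_of_isMinOn hs hsc hmin'⟩, fun ⟨N, hN⟩ ↦ h ⟨N, ?_⟩⟩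
  rintro _ ⟨r, hrc, rfl⟩
  exact (hN (mem_image_of_mem δ inf_le_right)).trans
    (delta_inf_le hsub (hFG r c hc hrc) hs (hmin' ⟨le_sup_right, sup_le hrc hsc⟩))

theorem bddBelow_image_Iic (hFG : CompactElementsDownwardClosed L) (hsub : SubmodularOnCompacts δ)
    (hwf : WellFounded (IsStrongLT δ)) {e : L} (he : IsCompactElement e) :
    BddBelow (δ '' Iic e) := by
  by_contra h
  obtain ⟨c, ⟨hce, hc⟩, hmin⟩ :=
    hwf.has_min {c | c ≤ e ∧ ¬ BddBelow (δ '' Iic c)} ⟨e, le_rfl, h⟩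
  obtain ⟨s, hsc, hs⟩ := exists_isStrongLT_of_not_bddBelow hFG hsub (hFG c e he hce) hc
  exact hmin s ⟨hsc.2.1.le.trans hce, hs⟩ hsc

theorem isStrong_iInf (hFG : CompactElementsDownwardClosed L) (hsub : SubmodularOnCompacts δ)
    (hwf : WellFounded (IsStrongLT δ)) {b : L} {ι : Type*} {a : ι → L} (ha : ∀ i, a i ≤ b)
    (hstr : ∀ i, IsStrong δ (a i) b) : IsStrong δ (⨅ i, a i) b := by
  intro x hx hxb y hy hya
  have he : IsCompactElement (x ⊔ y) := hx.sup hy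
  obtain ⟨v₀, hv₀, hv₀min⟩ := Int.exists_isMinOn_of_bddBelow (s := Icc y (x ⊔ y))
    ⟨x ⊔ y, le_sup_right, le_rfl⟩
    ((bddBelow_image_Iic hFG hsub hwf he).mono (image_mono Icc_subset_Iic_self))
  obtain ⟨v, ⟨⟨hyv, hve⟩, hvmin⟩, hvM⟩ := hwf.has_min
    {v | v ∈ Icc y (x ⊔ y) ∧ IsMinOn δ (Icc y (x ⊔ y)) v} ⟨v₀, hv₀, hv₀min⟩
  have hv : IsCompactElement v := hFG v _ he hve
  have hva : ∀ i, v ≤ a i := by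
    intro i
    have hyai : y ≤ a i := hya.trans (iInf_le a i)
    obtain ⟨u, hu, hyu, hua, hδu⟩ :=
      hstr i v hv (hve.trans (sup_le hxb (hyai.trans (ha i)))) y hy hyai
    have hvu : IsMinOn δ (Icc y (x ⊔ y)) (v ⊓ u) :=
      fun r hr ↦ (delta_inf_le hsub hv hu hδu).trans (hvmin hr)
    have hvu_eq : v ⊓ u = v := by
      by_contra hne
      refine hvM (v ⊓ u) ⟨⟨le_inf hyv hyu, inf_le_left.trans hve⟩, hvu⟩
        ⟨hv, inf_le_left.lt_of_ne hne, isStrong_of_isMinOn (hFG _ v hv inf_le_left) inf_le_left ?_⟩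
      exact hvu.on_subset (Icc_subset_Icc (le_inf hyv hyu) hve)
    exact (inf_eq_left.mp hvu_eq).trans hua
  exact ⟨v, hv, hyv, le_iInf hva, hvmin ⟨hyv.trans le_sup_right, sup_le le_sup_left hve⟩⟩

end

theorem iInf_isStrong_general {L : Type*} [CompleteLattice L] (δ : L → ℤ)
    (hFG : ∀ x c : L, IsCompactElement c → x ≤ c → IsCompactElement x)
    (hsub : ∀ x y : L, IsCompactElement x → IsCompactElement y →
      δ (x ⊔ y) + δ (x ⊓ y) ≤ δ x + δ y)
    (hDCC : ¬ ∃ c : ℕ → L, (∀ n, IsCompactElement (c n)) ∧ (∀ n, c (n + 1) < c n) ∧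
      ∀ n, IsStrong δ (c (n + 1)) (c n))
    (b : L) {ι : Type*} (a : ι → L) (ha : ∀ i, a i ≤ b) (hstr : ∀ i, IsStrong δ (a i) b) :
    IsStrong δ (⨅ i, a i) b ∧
    ∀ x : L, x ≤ b → IsStrong δ (sInf {a' : L | x ≤ a' ∧ a' ≤ b ∧ IsStrong δ a' b}) b := by
  have hwf := wellFounded_isStrongLT hDCC
  refine ⟨isStrong_iInf hFG hsub hwf ha hstr, fun x _ ↦ ?_⟩
  rw [sInf_eq_iInf']
  exact isStrong_iInf hFG hsub hwf (fun a' ↦ a'.2.2.1) fun a' ↦ a'.2.2.2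

/-- An arbitrary infimum of strong subelements of `b` is strong in `b`; in particular,
the self-sufficient closure `⌈x⌉_b` of any `x ≤ b` is strong in `b`. -/
theorem iInf_isStrong {L : Type*} [CompleteLattice L] (δ : L → ℤ)
    (hFG : ∀ x c : L, IsCompactElement c → x ≤ c → IsCompactElement x)
    (hbot : δ ⊥ = 0)
    (hsub : ∀ x y : L, IsCompactElement x → IsCompactElement y →
      δ (x ⊔ y) + δ (x ⊓ y) ≤ δ x + δ y)
    (hDCC : ¬ ∃ c : ℕ → L, (∀ n, IsCompactElement (c n)) ∧ (∀ n, c (n + 1) < c n) ∧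
      ∀ n, IsStrong δ (c (n + 1)) (c n))
    (b : L) {ι : Type*} (a : ι → L) (ha : ∀ i, a i ≤ b) (hstr : ∀ i, IsStrong δ (a i) b) :
    IsStrong δ (⨅ i, a i) b ∧
    ∀ x : L, x ≤ b → IsStrong δ (sInf {a' : L | x ≤ a' ∧ a' ≤ b ∧ IsStrong δ a' b}) b :=
  iInf_isStrong_general δ hFG hsub hDCC b a ha hstr
end

section
/- Let K be a differential field with derivation D and field of constants C, and let A, B be intermediate fields with C ⊆ A ⊆ K and C ⊆ B ⊆ K. Let A∨B denote the subfield of K generated by A ∪ B. Then σ(A∨B) + σ(A ∩ B) ≥ σ(A) + σ(B), where the inequality is in ℕ ∪ {∞}. -/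
/-!
Let `V = K/C` as a `ℚ`-vector space and let `L(A) ⊆ V` be the `ℚ`-span of the classes of those
`a ∈ A` for which `D y = y * D a` has a nonzero solution in `A`; these `a` form an additive group.
Then `σ(A)` is the supremum of the dimensions of the finite-dimensional subspaces of `L(A)`.
Clearly `L(A) + L(B) ⊆ L(A ∨ B)`. Moreover `L(A) ∩ L(B) ⊆ L(A ∩ B)` once `B` contains the
constants: after clearing denominators, a common class is represented by `a ∈ A` and `a' ∈ B`
with solutions `b ∈ A`, `b' ∈ B`; then `a - a'` and `b / b'` are constants, so `a, b ∈ B`.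
For finite-dimensional `U ⊆ L(A)`, `W ⊆ L(B)` this gives
`dim U + dim W = dim (U + W) + dim (U ∩ W) ≤ σ(A ∨ B) + σ(A ∩ B)`.
-/

open scoped ENat

/-- For an intermediate field `C ⊆ A ⊆ K` of a differential field `K` with constants `C`,
`σ(A) ∈ ℕ∞` is the supremum of the natural numbers `n` for which there are solutions
`(a₁, b₁), …, (aₙ, bₙ) ∈ A` of the exponential differential equation `D y = y·D x`
with `b i ≠ 0` and `a₁, …, aₙ` linearly independent over `ℚ` modulo `C` (i.e. their
images in the quotient `ℚ`-vector space `K/C` are linearly independent over `ℚ`). -/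
noncomputable def sigmaExp {K : Type*} [Field K] [CharZero K] (D : Derivation ℚ K K)
    (A : Subfield K) : ℕ∞ :=
  sSup {N : ℕ∞ | ∃ n : ℕ, N = n ∧ ∃ a b : Fin n → K,
    (∀ i, a i ∈ A) ∧ (∀ i, b i ∈ A) ∧ (∀ i, b i ≠ 0) ∧
    (∀ i, D (b i) = b i * D (a i)) ∧
    LinearIndependent ℚ
      (fun i => (Submodule.Quotient.mk (a i) : K ⧸ LinearMap.ker D.toLinearMap))}

theorem AddSubgroup.exists_nsmul_mem_of_mem_span_rat {V : Type*} [AddCommGroup V] [Module ℚ V]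
    (G : AddSubgroup V) {x : V} (hx : x ∈ Submodule.span ℚ (G : Set V)) :
    ∃ N : ℕ, 0 < N ∧ N • x ∈ G := by
  induction hx using Submodule.span_induction with
  | mem x hx => exact ⟨1, one_pos, by simpa using hx⟩
  | zero => exact ⟨1, one_pos, by simp⟩
  | add x y _ _ hx hy =>
    obtain ⟨N, hN, hNx⟩ := hx
    obtain ⟨M, hM, hMy⟩ := hy
    refine ⟨M * N, Nat.mul_pos hM hN, ?_⟩
    rw [smul_add, mul_smul, mul_smul, smul_comm M N y]
    exact G.add_mem (G.nsmul_mem hNx M) (G.nsmul_mem hMy N)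
  | smul q x _ hx =>
    obtain ⟨N, hN, hNx⟩ := hx
    refine ⟨q.den * N, Nat.mul_pos q.den_pos hN, ?_⟩
    have : (q.den * N) • q • x = q.num • N • x := by
      rw [← Nat.cast_smul_eq_nsmul ℚ, ← Nat.cast_smul_eq_nsmul ℚ N, ← Int.cast_smul_eq_zsmul ℚ,
        smul_smul, smul_smul]
      congr 1
      rw [Nat.cast_mul, mul_right_comm, mul_comm (q.den : ℚ) q, Rat.mul_den_eq_num]
    rw [this]
    exact G.zsmul_mem hNx q.num

theorem AddSubgroup.mem_span_rat_of_nsmul_mem {V : Type*} [AddCommGroup V] [Module ℚ V]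
    (G : AddSubgroup V) {x : V} {N : ℕ} (hN : N ≠ 0) (hNx : N • x ∈ G) :
    x ∈ Submodule.span ℚ (G : Set V) := by
  have hx : x = (N : ℚ)⁻¹ • N • x := by
    rw [← Nat.cast_smul_eq_nsmul ℚ, smul_smul, inv_mul_cancel₀ (by exact_mod_cast hN), one_smul]
  rw [hx]
  exact Submodule.smul_mem _ _ (Submodule.subset_span hNx)

namespace Derivation

variable {K : Type*} [Field K] [CharZero K] (D : Derivation ℚ K K)

def expDomain (A : Subfield K) : AddSubgroup K where
  carrier := {a | a ∈ A ∧ ∃ b ∈ A, b ≠ 0 ∧ D b = b * D a}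
  zero_mem' := ⟨A.zero_mem, 1, A.one_mem, one_ne_zero, by simp⟩
  add_mem' := by
    rintro a a' ⟨ha, b, hb, hb0, hDb⟩ ⟨ha', b', hb', hb0', hDb'⟩
    refine ⟨A.add_mem ha ha', b * b', A.mul_mem hb hb', mul_ne_zero hb0 hb0', ?_⟩
    rw [leibniz, hDb, hDb', smul_eq_mul, smul_eq_mul, map_add]
    ring
  neg_mem' := by
    rintro a ⟨ha, b, hb, hb0, hDb⟩
    refine ⟨A.neg_mem ha, b⁻¹, A.inv_mem hb, inv_ne_zero hb0, ?_⟩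
    rw [leibniz_inv, hDb, smul_eq_mul, map_neg]
    field_simp

def expClasses (A : Subfield K) : AddSubgroup (K ⧸ LinearMap.ker D.toLinearMap) :=
  (D.expDomain A).map (LinearMap.ker D.toLinearMap).mkQ.toAddMonoidHom

def expSpan (A : Subfield K) : Submodule ℚ (K ⧸ LinearMap.ker D.toLinearMap) :=
  Submodule.span ℚ (D.expClasses A)

variable {D}

theorem expDomain_mono {A B : Subfield K} (h : A ≤ B) : D.expDomain A ≤ D.expDomain B :=
  fun _ ⟨ha, b, hb, hb0, hDb⟩ => ⟨h ha, b, h hb, hb0, hDb⟩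

theorem expClasses_inf_le {A B : Subfield K} (hCB : ∀ c : K, D c = 0 → c ∈ B) :
    D.expClasses A ⊓ D.expClasses B ≤ D.expClasses (A ⊓ B) := by
  rintro _ ⟨⟨a, ⟨ha, b, hb, hb0, hDb⟩, rfl⟩, ⟨a', ⟨ha', b', hb', hb0', hDb'⟩, hclass⟩⟩
  have hDa : D a' = D a := by
    simpa [Submodule.Quotient.eq, sub_eq_zero] using hclass
  have haB : a ∈ B := by
    have hc : D (a - a') = 0 := by rw [map_sub, hDa, sub_self]
    simpa using B.add_mem (hCB _ hc) ha'
  have hbB : b ∈ B := by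
    have hc : D (b / b') = 0 := by
      rw [leibniz_div, hDb, hDb', hDa, smul_eq_mul, smul_eq_mul, smul_eq_mul]
      ring
    simpa [hb0'] using B.mul_mem (hCB _ hc) hb'
  exact ⟨a, ⟨⟨ha, haB⟩, b, ⟨hb, hbB⟩, hb0, hDb⟩, rfl⟩

theorem expSpan_mono {A B : Subfield K} (h : A ≤ B) : D.expSpan A ≤ D.expSpan B :=
  Submodule.span_mono (AddSubgroup.map_mono (expDomain_mono h))

theorem expSpan_inf_le {A B : Subfield K} (hCB : ∀ c : K, D c = 0 → c ∈ B) :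
    D.expSpan A ⊓ D.expSpan B ≤ D.expSpan (A ⊓ B) := by
  rintro x ⟨hxA, hxB⟩
  obtain ⟨N, hN, hNx⟩ := (D.expClasses A).exists_nsmul_mem_of_mem_span_rat hxA
  obtain ⟨M, hM, hMx⟩ := (D.expClasses B).exists_nsmul_mem_of_mem_span_rat hxB
  refine (D.expClasses (A ⊓ B)).mem_span_rat_of_nsmul_mem (N := M * N) (by positivity)
    (expClasses_inf_le hCB ⟨?_, ?_⟩)
  · rw [mul_smul]
    exact AddSubgroup.nsmul_mem _ hNx M
  · rw [mul_comm, mul_smul]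
    exact AddSubgroup.nsmul_mem _ hMx N

end Derivation

section

variable {K : Type*} [Field K] [CharZero K] {D : Derivation ℚ K K}

theorem finrank_le_sigmaExp {A : Subfield K} (U : Submodule ℚ (K ⧸ LinearMap.ker D.toLinearMap))
    [FiniteDimensional ℚ U] (hU : U ≤ D.expSpan A) :
    (Module.finrank ℚ U : ℕ∞) ≤ sigmaExp D A := by
  let w := Module.finBasis ℚ U
  choose N hN hNw using fun l => (D.expClasses A).exists_nsmul_mem_of_mem_span_rat (hU (w l).2)
  choose a ha hmk using hNw
  choose haA b hbA hb0 hDb using ha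
  refine le_sSup ⟨_, rfl, a, b, haA, hbA, hb0, hDb, ?_⟩
  have hw : LinearIndependent ℚ fun l => (w l : K ⧸ LinearMap.ker D.toLinearMap) :=
    w.linearIndependent.map' U.subtype (Submodule.ker_subtype U)
  convert hw.units_smul fun l => Units.mk0 (N l : ℚ) (by have := hN l; positivity) with l
  rw [Pi.smul_apply', Units.smul_mk0, Nat.cast_smul_eq_nsmul]
  exact hmk l

instance (A : Subfield K) : Nonempty {U : Submodule ℚ (K ⧸ LinearMap.ker D.toLinearMap) //
    FiniteDimensional ℚ U ∧ U ≤ D.expSpan A} :=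
  ⟨⊥, inferInstance, bot_le⟩

theorem sigmaExp_eq_iSup_finrank (A : Subfield K) :
    sigmaExp D A = ⨆ U : {U : Submodule ℚ (K ⧸ LinearMap.ker D.toLinearMap) //
      FiniteDimensional ℚ U ∧ U ≤ D.expSpan A}, (Module.finrank ℚ U.1 : ℕ∞) := by
  refine le_antisymm (sSup_le ?_) (iSup_le fun ⟨U, hfin, hU⟩ => finrank_le_sigmaExp U hU)
  rintro _ ⟨n, rfl, a, b, haA, hbA, hb0, hDb, hli⟩
  let U := Submodule.span ℚ
    (Set.range fun i => Submodule.Quotient.mk (p := LinearMap.ker D.toLinearMap) (a i))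
  have hU : U ≤ D.expSpan A := Submodule.span_le.mpr <| Set.range_subset_iff.mpr fun i =>
    Submodule.subset_span ⟨a i, ⟨haA i, b i, hbA i, hb0 i, hDb i⟩, rfl⟩
  refine le_iSup_of_le ⟨U, FiniteDimensional.span_of_finite ℚ (Set.finite_range _), hU⟩ ?_
  simp [U, finrank_span_eq_card hli]

end

theorem sigmaExp_supermodular_general {K : Type*} [Field K] [CharZero K] (D : Derivation ℚ K K)
    (A B : Subfield K)
    (hCB : ∀ c : K, D c = 0 → c ∈ B) :
    sigmaExp D A + sigmaExp D B ≤
      sigmaExp D (Subfield.closure ((A : Set K) ∪ (B : Set K))) + sigmaExp D (A ⊓ B) := by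
  rw [sigmaExp_eq_iSup_finrank A, sigmaExp_eq_iSup_finrank B]
  refine ENat.iSup_add_iSup_le fun U W => ?_
  obtain ⟨U, hUfin, hUA⟩ := U
  obtain ⟨W, hWfin, hWB⟩ := W
  have hsup : U ⊔ W ≤ D.expSpan (Subfield.closure ((A : Set K) ∪ (B : Set K))) := by
    rw [Subfield.closure_union, Subfield.closure_eq, Subfield.closure_eq]
    exact sup_le (hUA.trans (Derivation.expSpan_mono le_sup_left))
      (hWB.trans (Derivation.expSpan_mono le_sup_right))
  have hinf : U ⊓ W ≤ D.expSpan (A ⊓ B) :=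
    (inf_le_inf hUA hWB).trans (Derivation.expSpan_inf_le hCB)
  calc (Module.finrank ℚ U : ℕ∞) + Module.finrank ℚ W
      = Module.finrank ℚ ↥(U ⊔ W) + Module.finrank ℚ ↥(U ⊓ W) := by
        rw [← Nat.cast_add, ← Nat.cast_add, Submodule.finrank_sup_add_finrank_inf_eq]
    _ ≤ _ := add_le_add (finrank_le_sigmaExp _ hsup) (finrank_le_sigmaExp _ hinf)

/-- `σ` is supermodular: `σ(A∨B) + σ(A ∩ B) ≥ σ(A) + σ(B)`, where `A∨B` is the subfield
generated by `A ∪ B`. -/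
theorem sigmaExp_supermodular {K : Type*} [Field K] [CharZero K] (D : Derivation ℚ K K)
    (A B : Subfield K)
    (hCA : ∀ c : K, D c = 0 → c ∈ A) (hCB : ∀ c : K, D c = 0 → c ∈ B) :
    sigmaExp D A + sigmaExp D B ≤
      sigmaExp D (Subfield.closure ((A : Set K) ∪ (B : Set K))) + sigmaExp D (A ⊓ B) :=
  sigmaExp_supermodular_general D A B hCB
end
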